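/- arXiv:math/9604240 — 4 statements merged into one kernel-verified Lean document; each statement's English description precedes it below -/
import Mathlib

section
/- Let 0 < α < 1, let (j₀, j₁) be fixed with j₀ + j₁ = m, and let (yₙ⁽⁰⁾)ₙ be a sequence of natural numbers with yₙ⁽⁰⁾ ≤ n, yₙ⁽⁰⁾/n → α as n → ∞, and yₙ⁽⁰⁾ ≥ j₀, n - yₙ⁽⁰⁾ ≥ j₁ eventually. Then C(n-m, yₙ⁽⁰⁾ - j₀)/C(n, yₙ⁽⁰⁾) → α^{j₀}(1-α)^{j₁} as n → ∞. -/
open Filter Finset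

private lemma choose_ratio_eq (n y j₀ j₁ : ℕ) (hy : y ≤ n) (h0 : j₀ ≤ y) (h1 : j₁ ≤ n - y) :
    (((n - (j₀+j₁)).choose (y - j₀) : ℝ)) / (n.choose y) =
      ((y.descFactorial j₀ : ℝ) * ((n-y).descFactorial j₁ : ℝ)) / (n.descFactorial (j₀+j₁)) := by
  have hm : j₀ + j₁ ≤ n := by omega
  have e1 : n - (j₀+j₁) - (y - j₀) = n - y - j₁ := by omega
  rw [Nat.cast_choose ℝ (show y - j₀ ≤ n - (j₀+j₁) by omega), Nat.cast_choose ℝ hy, e1]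
  have d1 := Nat.factorial_mul_descFactorial hm
  have d2 := Nat.factorial_mul_descFactorial h0
  have d3 := Nat.factorial_mul_descFactorial h1
  have c1 : (((n - (j₀+j₁)).factorial : ℝ)) * n.descFactorial (j₀+j₁) = (n.factorial : ℝ) := by
    exact_mod_cast congrArg Nat.cast d1
  have c2 : (((y - j₀).factorial : ℝ)) * y.descFactorial j₀ = (y.factorial : ℝ) := by
    exact_mod_cast congrArg Nat.cast d2
  have c3 : (((n - y - j₁).factorial : ℝ)) * (n-y).descFactorial j₁ = ((n-y).factorial : ℝ) := by
    exact_mod_cast congrArg Nat.cast d3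
  have f0 : ∀ k : ℕ, ((k.factorial : ℝ)) ≠ 0 := fun k => Nat.cast_ne_zero.2 (Nat.factorial_ne_zero k)
  have df : ((n.descFactorial (j₀+j₁) : ℝ)) ≠ 0 := by
    simpa [Nat.descFactorial_eq_zero_iff_lt] using hm
  field_simp
  rw [← c1, ← c2, ← c3]; ring

/-- Hajian–Ito–Kakutani computation: `C(n-m, yₙ-j₀)/C(n, yₙ) → α^{j₀}(1-α)^{j₁}`. -/
theorem stmt_2 (α : ℝ) (hα0 : 0 < α) (hα1 : α < 1) (j₀ j₁ m : ℕ) (hm : j₀ + j₁ = m)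
    (y : ℕ → ℕ) (hy : ∀ n, y n ≤ n)
    (hlim : Tendsto (fun n => (y n : ℝ) / n) atTop (nhds α))
    (hev : ∀ᶠ n in atTop, j₀ ≤ y n ∧ j₁ ≤ n - y n) :
    Tendsto (fun n => ((n - m).choose (y n - j₀) : ℝ) / (n.choose (y n) : ℝ)) atTop
      (nhds (α ^ j₀ * (1 - α) ^ j₁)) := by
  subst hm
  -- auxiliary limit: i/n → 0
  have hinv : ∀ i : ℕ, Tendsto (fun n : ℕ => (i : ℝ) / n) atTop (nhds 0) :=
    fun i => tendsto_const_div_atTop_nhds_zero_nat (i : ℝ)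
  set g : ℕ → ℝ := fun n =>
    ((∏ i ∈ range j₀, ((y n - i : ℕ) : ℝ) / n) * ∏ i ∈ range j₁, ((n - y n - i : ℕ) : ℝ) / n) /
      ∏ i ∈ range (j₀ + j₁), ((n - i : ℕ) : ℝ) / n with hg
  have key : ∀ᶠ n in atTop,
      ((n - (j₀ + j₁)).choose (y n - j₀) : ℝ) / (n.choose (y n) : ℝ) = g n := by
    filter_upwards [hev, eventually_ge_atTop 1] with n hn hn1
    have hn0 : (n : ℝ) ≠ 0 := by positivity
    rw [choose_ratio_eq n (y n) j₀ j₁ (hy n) hn.1 hn.2, hg]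
    simp only [Finset.prod_div_distrib, Finset.prod_const, Finset.card_range]
    rw [Nat.descFactorial_eq_prod_range, Nat.descFactorial_eq_prod_range,
      Nat.descFactorial_eq_prod_range]
    push_cast
    rw [div_mul_div_comm, ← pow_add]
    rcases eq_or_ne ((∏ x ∈ Finset.range (j₀ + j₁), ((n - x : ℕ) : ℝ))) 0 with h | h
    · simp [h]
    · have hc : ((n : ℝ)) ^ (j₀ + j₁) ≠ 0 := pow_ne_zero _ hn0
      field_simp
  apply Tendsto.congr' (key.mono fun n h => h.symm)
  have l1 : ∀ i ∈ range j₀, Tendsto (fun n : ℕ => ((y n - i : ℕ) : ℝ) / n) atTop (nhds α) := by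
    intro i hi
    have : Tendsto (fun n : ℕ => (y n : ℝ) / n - (i : ℝ) / n) atTop (nhds (α - 0)) :=
      hlim.sub (hinv i)
    rw [sub_zero] at this
    refine this.congr' ?_
    filter_upwards [hev] with n hn
    have : i ≤ y n := by have := Finset.mem_range.1 hi; omega
    rw [Nat.cast_sub this, sub_div]
  have l2 : ∀ i ∈ range j₁,
      Tendsto (fun n : ℕ => ((n - y n - i : ℕ) : ℝ) / n) atTop (nhds (1 - α)) := by
    intro i hi
    have h1 : Tendsto (fun n : ℕ => (n : ℝ) / n - (y n : ℝ) / n - (i : ℝ) / n) atTop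
        (nhds (1 - α - 0)) := by
      refine (Tendsto.sub ?_ hlim).sub (hinv i)
      refine tendsto_const_nhds.congr' ?_
      filter_upwards [eventually_ge_atTop 1] with n hn
      have : (n : ℝ) ≠ 0 := by positivity
      rw [div_self this]
    rw [sub_zero] at h1
    refine h1.congr' ?_
    filter_upwards [hev] with n hn
    have hle : i ≤ n - y n := by have := Finset.mem_range.1 hi; omega
    have : ((n - y n - i : ℕ) : ℝ) = (n : ℝ) - y n - i := by
      have := hy n
      push_cast [Nat.cast_sub (by omega : i ≤ n - y n), Nat.cast_sub (hy n)]
      ring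
    rw [this, sub_div, sub_div]
  have l3 : ∀ i ∈ range (j₀ + j₁),
      Tendsto (fun n : ℕ => ((n - i : ℕ) : ℝ) / n) atTop (nhds 1) := by
    intro i _
    have h1 : Tendsto (fun n : ℕ => (n : ℝ) / n - (i : ℝ) / n) atTop (nhds (1 - 0)) := by
      refine Tendsto.sub ?_ (hinv i)
      refine tendsto_const_nhds.congr' ?_
      filter_upwards [eventually_ge_atTop 1] with n hn
      have : (n : ℝ) ≠ 0 := by positivity
      rw [div_self this]
    rw [sub_zero] at h1
    refine h1.congr' ?_
    filter_upwards [eventually_ge_atTop i] with n hn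
    rw [Nat.cast_sub hn, sub_div]
  have p1 := tendsto_finset_prod (range j₀) l1
  have p2 := tendsto_finset_prod (range j₁) l2
  have p3 := tendsto_finset_prod (range (j₀ + j₁)) l3
  simp only [Finset.prod_const, Finset.card_range] at p1 p2 p3
  have h := (p1.mul p2).div p3 (by simp)
  simp only [one_pow, div_one] at h
  exact h
end

section
/- For the golden mean shift of finite type (forbidding the word 11 in {0,1}^ℕ), a sequence x is maximal with respect to the reverse-lexicographic-induced partial order on its finite-permutation class if and only if x is eventually periodic of a specific form; in particular, the set of maximal elements is countable. -/
/-- The one-sided golden mean SFT: no two consecutive 1's. -/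
def GoldenMean : Set (ℕ → Fin 2) := {x | ∀ k, ¬(x k = 1 ∧ x (k + 1) = 1)}

/-- `a` and `b` agree eventually and their initial segments are permutations of
each other. -/
def FinPermNat (a b : ℕ → Fin 2) : Prop :=
  ∃ K : ℕ, (∀ k, K ≤ k → a k = b k) ∧ ∃ e : Equiv.Perm (Fin K), ∀ i : Fin K, b i = a (e i)

/-- The reverse-lexicographic-induced partial order on finite-permutation classes:
`x ≺ x'` iff they are distinct finite permutations of each other and `x n < x' n`
at the largest coordinate `n` where they differ. -/
def PrecGM (x x' : ℕ → Fin 2) : Prop :=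
  x ≠ x' ∧ FinPermNat x x' ∧
    ∃ n : ℕ, (∀ k, n < k → x k = x' k) ∧ (x n : ℕ) < (x' n : ℕ)

/-- `x` is a maximal element of the golden mean shift for this order. -/
def MaximalGM (x : ℕ → Fin 2) : Prop :=
  x ∈ GoldenMean ∧ ¬∃ x' ∈ GoldenMean, PrecGM x x'

lemma fin2_cases (a : Fin 2) : a = 0 ∨ a = 1 := by
  fin_cases a <;> simp

lemma gm_zero_succ {x : ℕ → Fin 2} (hx : x ∈ GoldenMean) {n : ℕ} (h : x n = 1) :
    x (n + 1) = 0 := by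
  rcases fin2_cases (x (n + 1)) with h0 | h1
  · exact h0
  · exact absurd ⟨h, h1⟩ (hx n)

/-- Key step: in a maximal sequence, a `1` at `n` forces a `1` at `n+2`. -/
lemma gm_step {x : ℕ → Fin 2} (hx : MaximalGM x) {n : ℕ} (h1 : x n = 1) :
    x (n + 2) = 1 := by
  by_contra hne
  have h2 : x (n + 2) = 0 := (fin2_cases _).resolve_right hne
  have hx1 : x (n + 1) = 0 := gm_zero_succ hx.1 h1
  set x' : ℕ → Fin 2 := fun k => if k = n then 0 else if k = n + 1 then 1 else x k with hx'def
  apply hx.2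
  refine ⟨x', ?_, ?_, ?_, n + 1, ?_, ?_⟩
  · -- golden mean
    intro k hk
    rcases hk with ⟨hk1, hk2⟩
    by_cases e0 : k = n
    · simp [hx'def, e0] at hk1
    by_cases e1 : k + 1 = n
    · simp [hx'def, e1] at hk2
    by_cases e2 : k = n + 1
    · subst e2
      simp only [hx'def] at hk2
      rw [if_neg (by omega), if_neg (by omega)] at hk2
      exact absurd hk2 (by rw [h2]; decide)
    · have e3 : k + 1 ≠ n + 1 := by omega
      simp only [hx'def] at hk1 hk2
      rw [if_neg e0, if_neg e2] at hk1
      rw [if_neg e1, if_neg e3] at hk2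
      exact hx.1 k ⟨hk1, hk2⟩
  · -- x ≠ x'
    intro h
    have : x n = x' n := by rw [h]
    rw [h1] at this
    simp [hx'def] at this
  · -- FinPermNat
    refine ⟨n + 2, ?_, Equiv.swap ⟨n, by omega⟩ ⟨n + 1, by omega⟩, ?_⟩
    · intro k hk
      simp only [hx'def]
      rw [if_neg (by omega), if_neg (by omega)]
    · intro i
      by_cases hi0 : i = ⟨n, by omega⟩
      · subst hi0
        rw [Equiv.swap_apply_left]
        simp [hx'def, hx1]
      by_cases hi1 : i = ⟨n + 1, by omega⟩
      · subst hi1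
        rw [Equiv.swap_apply_right]
        simp [hx'def, h1]
      · rw [Equiv.swap_apply_of_ne_of_ne hi0 hi1]
        have v0 : (i : ℕ) ≠ n := fun h => hi0 (Fin.ext h)
        have v1 : (i : ℕ) ≠ n + 1 := fun h => hi1 (Fin.ext h)
        simp only [hx'def]
        rw [if_neg v0, if_neg v1]
  · -- agree above n+1
    intro k hk
    simp only [hx'def]
    rw [if_neg (by omega), if_neg (by omega)]
  · -- strict increase at n+1
    simp [hx'def, hx1]

/-- The explicit family `0^a (1 0)^∞`. -/
def gmF (a : ℕ) : ℕ → Fin 2 := fun k => if a ≤ k ∧ (k - a) % 2 = 0 then 1 else 0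

lemma gm_ones {x : ℕ → Fin 2} (hx : MaximalGM x) {a : ℕ} (ha : x a = 1) :
    ∀ j, x (a + 2 * j) = 1 := by
  intro j
  induction j with
  | zero => simpa using ha
  | succ j ih =>
      rw [show a + 2 * (j + 1) = (a + 2 * j) + 2 by ring]
      exact gm_step hx ih

/-- Classification of maximal sequences. -/
lemma gm_classify {x : ℕ → Fin 2} (hx : MaximalGM x) :
    x = (fun _ => 0) ∨ ∃ a, x = gmF a := by
  by_cases h : ∃ n, x n = 1
  · right
    refine ⟨Nat.find h, ?_⟩
    set a := Nat.find h with hadef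
    have ha : x a = 1 := Nat.find_spec h
    have hmin : ∀ k, k < a → x k = 0 := fun k hk =>
      (fin2_cases _).resolve_right (Nat.find_min h hk)
    funext k
    unfold gmF
    by_cases hk : a ≤ k ∧ (k - a) % 2 = 0
    · rw [if_pos hk]
      obtain ⟨hak, hpar⟩ := hk
      obtain ⟨j, hj⟩ : ∃ j, k = a + 2 * j := ⟨(k - a) / 2, by omega⟩
      rw [hj]; exact gm_ones hx ha j
    · rw [if_neg hk]
      by_cases hak : a ≤ k
      · have hpar : (k - a) % 2 = 1 := by omega
        obtain ⟨j, hj⟩ : ∃ j, k = (a + 2 * j) + 1 := ⟨(k - a) / 2, by omega⟩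
        rw [hj]
        exact gm_zero_succ hx.1 (gm_ones hx ha j)
      · exact hmin k (by omega)
  · left
    push_neg at h
    funext k
    exact (fin2_cases _).resolve_right (h k)

/-- Maximal elements of the golden mean shift are eventually periodic; in
particular the set of maximal elements is countable. -/
theorem stmt_7 :
    (∀ x, MaximalGM x → ∃ N p : ℕ, 0 < p ∧ ∀ k, N ≤ k → x (k + p) = x k) ∧
    Set.Countable {x | MaximalGM x} := by
  constructor
  · intro x hx
    rcases gm_classify hx with h | ⟨a, h⟩
    · exact ⟨0, 1, one_pos, fun k _ => by rw [h]⟩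
    · refine ⟨a, 2, two_pos, fun k hk => ?_⟩
      rw [h]
      unfold gmF
      have : (a ≤ k + 2 ∧ (k + 2 - a) % 2 = 0) ↔ (a ≤ k ∧ (k - a) % 2 = 0) := by omega
      rw [if_congr this rfl rfl]
  · have hsub : {x | MaximalGM x} ⊆ insert (fun _ => 0) (Set.range gmF) := by
      intro x hx
      rcases gm_classify hx with h | ⟨a, h⟩
      · exact Or.inl h
      · exact Or.inr ⟨a, h.symm⟩
    exact ((Set.countable_range gmF).insert _).mono hsub
end

section
/- The map Ψ on the one-sided golden mean shift Σ_A⁺ ⊂ {0,1}^ℕ (no two consecutive 1's, with infinitely many symbols) that replaces each occurrence of the block '10' by the symbol 'b' and each remaining '0' by 'a' is a bijection from Σ_A⁺ onto {a,b}^ℕ, and two points x, x' ∈ Σ_A⁺ are finite permutations of each other if and only if Ψ(x) and Ψ(x') are finite permutations of each other. -/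
/-- The start position of the `j`-th block in the parsing of a golden mean sequence
into blocks `10` and `0`. -/
def blockStart (x : ℕ → Fin 2) : ℕ → ℕ
  | 0 => 0
  | j + 1 => blockStart x j + (if x (blockStart x j) = 1 then 2 else 1)

/-- The recoding map `Ψ` on the golden mean shift: the `j`-th block `10` becomes `1`
(the symbol `b`) and the `j`-th block `0` becomes `0` (the symbol `a`). -/
def PsiGM (x : ℕ → Fin 2) : ℕ → Fin 2 := fun j => x (blockStart x j)

/-- `a` and `b` agree eventually and their initial segments are rearrangements of
each other. -/
def FinPerm2 (a b : ℕ → Fin 2) : Prop :=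
  ∃ K : ℕ, (∀ k, K ≤ k → a k = b k) ∧ ∃ e : Equiv.Perm (Fin K), ∀ i : Fin K, b i = a (e i)

namespace GMaux

lemma fin2_eq_zero {v : Fin 2} (h : v ≠ 1) : v = 0 := by
  fin_cases v <;> simp_all

lemma fin2_val_eq_ite (v : Fin 2) : (v : ℕ) = if v = 1 then 1 else 0 := by
  fin_cases v <;> simp

/-- number of ones in the length-`n` prefix -/
def ones (a : ℕ → Fin 2) (n : ℕ) : ℕ := ∑ i ∈ Finset.range n, (a i : ℕ)

lemma ones_succ (a : ℕ → Fin 2) (n : ℕ) : ones a (n + 1) = ones a n + (a n : ℕ) :=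
  Finset.sum_range_succ _ _

lemma bs_succ (x : ℕ → Fin 2) (j : ℕ) :
    blockStart x (j + 1) = blockStart x j + (if x (blockStart x j) = 1 then 2 else 1) := rfl

lemma bs_lt (x : ℕ → Fin 2) (j : ℕ) : blockStart x j < blockStart x (j + 1) := by
  rw [bs_succ]; split <;> omega

lemma bs_le_add (x : ℕ → Fin 2) (J i : ℕ) : blockStart x J ≤ blockStart x (J + i) := by
  induction i with
  | zero => exact le_rfl
  | succ i ih => exact ih.trans (bs_lt x (J + i)).le

lemma bs_eq (x : ℕ → Fin 2) (j : ℕ) : blockStart x j = j + ones (PsiGM x) j := by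
  induction j with
  | zero => rfl
  | succ j ih =>
    have hps : (PsiGM x j : ℕ) = if x (blockStart x j) = 1 then 1 else 0 :=
      fin2_val_eq_ite _
    rw [bs_succ, ones_succ, hps]
    by_cases h : x (blockStart x j) = 1 <;> simp [h] <;> omega

lemma ones_bs (x : ℕ → Fin 2) (hx : ∀ k, ¬(x k = 1 ∧ x (k + 1) = 1)) (j : ℕ) :
    ones x (blockStart x j) = ones (PsiGM x) j := by
  induction j with
  | zero => rfl
  | succ j ih =>
    rw [bs_succ, ones_succ]
    by_cases h : x (blockStart x j) = 1
    · have h0 : x (blockStart x j + 1) = 0 := fin2_eq_zero (fun h1 => hx _ ⟨h, h1⟩)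
      rw [if_pos h]
      have hsum : ones x (blockStart x j + 2) =
          ones x (blockStart x j) + (x (blockStart x j) : ℕ)
            + (x (blockStart x j + 1) : ℕ) := by
        rw [show blockStart x j + 2 = (blockStart x j + 1) + 1 from rfl, ones_succ, ones_succ]
      rw [hsum, h, h0, ih]
      simp [PsiGM, h]
    · have h0 : x (blockStart x j) = 0 := fin2_eq_zero h
      rw [if_neg h, ones_succ, h0, ih]
      simp [PsiGM, h0]

lemma coverage (x : ℕ → Fin 2) (J : ℕ) :
    ∀ k, blockStart x J ≤ k →
      ∃ i, blockStart x (J + i) ≤ k ∧ k < blockStart x (J + i + 1) := by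
  intro k
  induction k with
  | zero =>
    intro h
    have eq1 : blockStart x (J + 0) = blockStart x J := rfl
    have eq2 : blockStart x (J + 0 + 1) = blockStart x (J + 1) := rfl
    have := bs_lt x J
    exact ⟨0, by omega, by omega⟩
  | succ k ih =>
    intro h
    by_cases hb : blockStart x J ≤ k
    · obtain ⟨i, h1, h2⟩ := ih hb
      by_cases hc : k + 1 < blockStart x (J + i + 1)
      · exact ⟨i, by omega, hc⟩
      · have eq1 : blockStart x (J + (i + 1)) = blockStart x (J + i + 1) := rfl
        have eq2 : blockStart x (J + (i + 1) + 1) = blockStart x (J + i + 1 + 1) := rfl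
        have := bs_lt x (J + i + 1)
        exact ⟨i + 1, by omega, by omega⟩
    · have eq1 : blockStart x (J + 0) = blockStart x J := rfl
      have eq2 : blockStart x (J + 0 + 1) = blockStart x (J + 1) := rfl
      have := bs_lt x J
      exact ⟨0, by omega, by omega⟩

lemma lemC (x : ℕ → Fin 2) (m : ℕ) (h0 : x m = 0) :
    ∃ j, blockStart x (j + 1) = m + 1 := by
  obtain ⟨i, h1, h2⟩ := coverage x 0 m (Nat.zero_le m)
  simp only [Nat.zero_add] at h1 h2
  refine ⟨i, ?_⟩
  by_cases h : x (blockStart x i) = 1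
  · have hstep : blockStart x (i + 1) = blockStart x i + 2 := by rw [bs_succ, if_pos h]
    have hne : m ≠ blockStart x i := by
      intro he
      rw [he, h] at h0
      exact absurd h0 (by decide)
    omega
  · have hstep : blockStart x (i + 1) = blockStart x i + 1 := by rw [bs_succ, if_neg h]
    omega

lemma bs_agree_of_tail (x x' : ℕ → Fin 2) {J J' : ℕ}
    (hs : blockStart x J = blockStart x' J')
    (hag : ∀ k, blockStart x J ≤ k → x k = x' k) :
    ∀ i, blockStart x (J + i) = blockStart x' (J' + i) := by
  intro i
  induction i with
  | zero => exact hs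
  | succ i ih =>
    have hxv : x (blockStart x (J + i)) = x' (blockStart x' (J' + i)) := by
      rw [← ih]; exact hag _ (bs_le_add x J i)
    rw [show J + (i + 1) = (J + i) + 1 from rfl, show J' + (i + 1) = (J' + i) + 1 from rfl,
      bs_succ, bs_succ, hxv, ih]

lemma engine (x x' : ℕ → Fin 2)
    (hx : ∀ k, ¬(x k = 1 ∧ x (k + 1) = 1)) (hx' : ∀ k, ¬(x' k = 1 ∧ x' (k + 1) = 1))
    {J J' : ℕ} (hs : blockStart x J = blockStart x' J')
    (hΨ : ∀ i, PsiGM x (J + i) = PsiGM x' (J' + i)) :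
    (∀ i, blockStart x (J + i) = blockStart x' (J' + i)) ∧
    (∀ k, blockStart x J ≤ k → x k = x' k) := by
  have hbs : ∀ i, blockStart x (J + i) = blockStart x' (J' + i) := by
    intro i
    induction i with
    | zero => exact hs
    | succ i ih =>
      have hxv : x (blockStart x (J + i)) = x' (blockStart x' (J' + i)) := hΨ i
      rw [show J + (i + 1) = (J + i) + 1 from rfl, show J' + (i + 1) = (J' + i) + 1 from rfl,
        bs_succ, bs_succ, hxv, ih]
  refine ⟨hbs, ?_⟩
  intro k hk
  obtain ⟨i, h1, h2⟩ := coverage x J k hk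
  have hΨi : x (blockStart x (J + i)) = x' (blockStart x' (J' + i)) := hΨ i
  by_cases h : x (blockStart x (J + i)) = 1
  · have hstep : blockStart x (J + i + 1) = blockStart x (J + i) + 2 := by
      rw [bs_succ, if_pos h]
    rcases (by omega : k = blockStart x (J + i) ∨ k = blockStart x (J + i) + 1) with hk' | hk'
    · subst hk'
      rw [hΨi, hbs i]
    · have h' : x' (blockStart x' (J' + i)) = 1 := by rw [← hΨi]; exact h
      have hx1 : x (blockStart x (J + i) + 1) = 0 := fin2_eq_zero fun h1 => hx _ ⟨h, h1⟩
      have hx1' : x' (blockStart x' (J' + i) + 1) = 0 := fin2_eq_zero fun h1 => hx' _ ⟨h', h1⟩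
      have e1 : x k = 0 := by rw [hk']; exact hx1
      have e2 : x' k = 0 := by rw [hk', hbs i]; exact hx1'
      rw [e1, e2]
  · have hstep : blockStart x (J + i + 1) = blockStart x (J + i) + 1 := by
      rw [bs_succ, if_neg h]
    have hk' : k = blockStart x (J + i) := by omega
    subst hk'
    rw [hΨi, hbs i]

/-! ### the inverse map -/

def tG (y : ℕ → Fin 2) : ℕ → ℕ
  | 0 => 0
  | j + 1 => tG y j + 1 + (y j : ℕ)

lemma tG_lt (y : ℕ → Fin 2) (j : ℕ) : tG y j < tG y (j + 1) := by
  show tG y j < tG y j + 1 + (y j : ℕ); omega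

lemma tG_strictMono (y : ℕ → Fin 2) : StrictMono (tG y) :=
  strictMono_nat_of_lt_succ (tG_lt y)

lemma tG_ge (y : ℕ → Fin 2) (j : ℕ) : j ≤ tG y j := by
  induction j with
  | zero => exact le_rfl
  | succ j ih => have := tG_lt y j; omega

def idx (y : ℕ → Fin 2) (k : ℕ) : ℕ := Nat.findGreatest (fun j => tG y j ≤ k) k

lemma idx_spec (y : ℕ → Fin 2) (k : ℕ) :
    tG y (idx y k) ≤ k ∧ k < tG y (idx y k + 1) := by
  have h1 : tG y (idx y k) ≤ k :=
    Nat.findGreatest_spec (P := fun j => tG y j ≤ k) (Nat.zero_le k) (by simp [tG])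
  refine ⟨h1, ?_⟩
  by_cases h : idx y k + 1 ≤ k
  · have h2 : ¬ (fun j => tG y j ≤ k) (idx y k + 1) :=
      Nat.findGreatest_is_greatest (P := fun j => tG y j ≤ k) (n := k)
        (Nat.lt_succ_self _) h
    simp only [] at h2
    omega
  · have := tG_ge y (idx y k + 1)
    omega

lemma tG_unique (y : ℕ → Fin 2) {a b k : ℕ} (ha : tG y a ≤ k) (ha' : k < tG y (a + 1))
    (hb : tG y b ≤ k) (hb' : k < tG y (b + 1)) : a = b := by
  rcases lt_trichotomy a b with h | h | h
  · have := (tG_strictMono y).monotone (show a + 1 ≤ b from h)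
    omega
  · exact h
  · have := (tG_strictMono y).monotone (show b + 1 ≤ a from h)
    omega

def PhiG (y : ℕ → Fin 2) (k : ℕ) : Fin 2 :=
  if tG y (idx y k) = k then y (idx y k) else 0

lemma idx_tG (y : ℕ → Fin 2) (j : ℕ) : idx y (tG y j) = j :=
  tG_unique y (idx_spec y (tG y j)).1 (idx_spec y (tG y j)).2 le_rfl (tG_lt y j)

lemma PhiG_tG (y : ℕ → Fin 2) (j : ℕ) : PhiG y (tG y j) = y j := by
  simp [PhiG, idx_tG]

lemma PhiG_eq_one {y : ℕ → Fin 2} {k : ℕ} (h : PhiG y k = 1) :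
    tG y (idx y k) = k ∧ y (idx y k) = 1 := by
  unfold PhiG at h
  split at h
  · exact ⟨‹_›, h⟩
  · exact absurd h (by decide)

lemma PhiG_mem (y : ℕ → Fin 2) : ∀ k, ¬(PhiG y k = 1 ∧ PhiG y (k + 1) = 1) := by
  rintro k ⟨h1, h2⟩
  obtain ⟨ht1, hy1⟩ := PhiG_eq_one h1
  obtain ⟨ht2, hy2⟩ := PhiG_eq_one h2
  have hstep : tG y (idx y k + 1) = k + 2 := by
    show tG y (idx y k) + 1 + (y (idx y k) : ℕ) = k + 2
    rw [ht1, hy1]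
    rfl
  have hidx : idx y (k + 1) = idx y k :=
    tG_unique y (idx_spec y (k + 1)).1 (idx_spec y (k + 1)).2 (by omega) (by omega)
  rw [hidx] at ht2
  omega

lemma bs_Phi (y : ℕ → Fin 2) (j : ℕ) : blockStart (PhiG y) j = tG y j := by
  induction j with
  | zero => rfl
  | succ j ih =>
    rw [bs_succ, ih, PhiG_tG]
    show tG y j + _ = tG y j + 1 + (y j : ℕ)
    by_cases h : y j = 1
    · rw [if_pos h, h]
      rfl
    · rw [if_neg h, fin2_eq_zero h]
      rfl

lemma Psi_Phi (y : ℕ → Fin 2) : PsiGM (PhiG y) = y := by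
  funext j
  show PhiG y (blockStart (PhiG y) j) = y j
  rw [bs_Phi, PhiG_tG]

/-! ### permutation characterization -/

lemma sum_val_eq_card {K : ℕ} (f : Fin K → Fin 2) :
    ∑ i, (f i : ℕ) = (Finset.univ.filter (fun i => f i = 1)).card := by
  rw [Finset.card_filter]
  exact Finset.sum_congr rfl fun i _ => fin2_val_eq_ite (f i)

lemma exists_perm {K : ℕ} (f g : Fin K → Fin 2)
    (h : ∑ i, (f i : ℕ) = ∑ i, (g i : ℕ)) :
    ∃ e : Equiv.Perm (Fin K), ∀ i, g i = f (e i) := by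
  have hc : Fintype.card {i // g i = 1} = Fintype.card {i // f i = 1} := by
    simp only [Fintype.card_subtype]
    rw [← sum_val_eq_card, ← sum_val_eq_card, h]
  have hc' : Fintype.card {i // ¬ g i = 1} = Fintype.card {i // ¬ f i = 1} := by
    rw [Fintype.card_subtype_compl, Fintype.card_subtype_compl, hc]
  obtain ⟨e1⟩ := Fintype.card_eq.mp hc
  obtain ⟨e0⟩ := Fintype.card_eq.mp hc'
  refine ⟨(Equiv.sumCompl (fun i => g i = 1)).symm.trans
    ((e1.sumCongr e0).trans (Equiv.sumCompl (fun i => f i = 1))), fun i => ?_⟩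
  by_cases hgi : g i = 1
  · have : ((Equiv.sumCompl (fun i => g i = 1)).symm.trans
        ((e1.sumCongr e0).trans (Equiv.sumCompl (fun i => f i = 1)))) i
        = (e1 ⟨i, hgi⟩ : Fin K) := by
      rw [Equiv.trans_apply, Equiv.trans_apply,
        Equiv.sumCompl_symm_apply_of_pos (p := fun i => g i = 1) hgi, Equiv.sumCongr_apply, Sum.map_inl,
        Equiv.sumCompl_apply_inl]
    rw [this, hgi, (e1 ⟨i, hgi⟩).2]
  · have : ((Equiv.sumCompl (fun i => g i = 1)).symm.trans
        ((e1.sumCongr e0).trans (Equiv.sumCompl (fun i => f i = 1)))) i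
        = (e0 ⟨i, hgi⟩ : Fin K) := by
      rw [Equiv.trans_apply, Equiv.trans_apply,
        Equiv.sumCompl_symm_apply_of_neg (p := fun i => g i = 1) hgi, Equiv.sumCongr_apply, Sum.map_inr,
        Equiv.sumCompl_apply_inr]
    rw [this, fin2_eq_zero hgi, fin2_eq_zero (e0 ⟨i, hgi⟩).2]

lemma finPerm2_iff (a b : ℕ → Fin 2) :
    FinPerm2 a b ↔ ∃ K, (∀ k, K ≤ k → a k = b k) ∧ ones a K = ones b K := by
  constructor
  · rintro ⟨K, hag, e, he⟩
    refine ⟨K, hag, ?_⟩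
    calc ones a K = ∑ i : Fin K, (a i : ℕ) :=
          (Fin.sum_univ_eq_sum_range (fun i => (a i : ℕ)) K).symm
      _ = ∑ i : Fin K, (a (e i) : ℕ) := (Equiv.sum_comp e (fun i : Fin K => (a i : ℕ))).symm
      _ = ∑ i : Fin K, (b i : ℕ) := Finset.sum_congr rfl fun i _ => by rw [he i]
      _ = ones b K := Fin.sum_univ_eq_sum_range (fun i => (b i : ℕ)) K
  · rintro ⟨K, hag, hones⟩
    obtain ⟨e, he⟩ := exists_perm (fun i : Fin K => a i) (fun i : Fin K => b i) (by
      rw [Fin.sum_univ_eq_sum_range (fun i => (a i : ℕ)) K,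
        Fin.sum_univ_eq_sum_range (fun i => (b i : ℕ)) K]
      exact hones)
    exact ⟨K, hag, e, he⟩

lemma ones_ext {a b : ℕ → Fin 2} {K : ℕ} (hag : ∀ k, K ≤ k → a k = b k)
    (h : ones a K = ones b K) : ∀ N, K ≤ N → ones a N = ones b N := by
  intro N hN
  induction N, hN using Nat.le_induction with
  | base => exact h
  | succ n hn ih => rw [ones_succ, ones_succ, ih, hag n hn]

end GMaux

open GMaux

/-- `Ψ` is a bijection from the golden mean shift onto the full 2-shift and carries the
finite-permutation relation `S_A⁺` onto `S₂⁺`. -/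
theorem stmt_16 :
    Set.BijOn PsiGM {x : ℕ → Fin 2 | ∀ k, ¬(x k = 1 ∧ x (k + 1) = 1)} Set.univ ∧
    ∀ x ∈ {x : ℕ → Fin 2 | ∀ k, ¬(x k = 1 ∧ x (k + 1) = 1)},
      ∀ x' ∈ {x : ℕ → Fin 2 | ∀ k, ¬(x k = 1 ∧ x (k + 1) = 1)},
        (FinPerm2 x x' ↔ FinPerm2 (PsiGM x) (PsiGM x')) := by
  constructor
  · refine ⟨fun x _ => trivial, ?_, ?_⟩
    · intro x hx x' hx' h
      funext k
      exact (engine x x' hx hx' (J := 0) (J' := 0) rfl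
        (fun i => by rw [h])).2 k (Nat.zero_le k)
    · intro y _
      exact ⟨PhiG y, PhiG_mem y, Psi_Phi y⟩
  · intro x hx x' hx'
    rw [finPerm2_iff, finPerm2_iff]
    constructor
    · rintro ⟨K, hag, hones⟩
      obtain ⟨m, hmK, hm0⟩ : ∃ m, K ≤ m ∧ x m = 0 := by
        by_cases h : x K = 1
        · exact ⟨K + 1, by omega, fin2_eq_zero (fun h1 => hx K ⟨h, h1⟩)⟩
        · exact ⟨K, le_rfl, fin2_eq_zero h⟩
      obtain ⟨j, hj⟩ := lemC x m hm0
      have hm0' : x' m = 0 := by rw [← hag m hmK]; exact hm0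
      obtain ⟨j', hj'⟩ := lemC x' m hm0'
      have honesm := ones_ext hag hones (m + 1) (by omega)
      have e1 := bs_eq x (j + 1)
      have e2 := ones_bs x hx (j + 1)
      have e1' := bs_eq x' (j' + 1)
      have e2' := ones_bs x' hx' (j' + 1)
      rw [hj] at e1 e2
      rw [hj'] at e1' e2'
      have hjj : j = j' := by omega
      subst hjj
      have hsx : blockStart x (j + 1) = blockStart x' (j + 1) := by rw [hj, hj']
      have hagm : ∀ k, blockStart x (j + 1) ≤ k → x k = x' k := by
        intro k hk
        rw [hj] at hk
        exact hag k (by omega)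
      have hbs := bs_agree_of_tail x x' hsx hagm
      refine ⟨j + 1, ?_, by omega⟩
      intro k hk
      obtain ⟨i, rfl⟩ : ∃ i, k = (j + 1) + i := ⟨k - (j + 1), by omega⟩
      show x (blockStart x ((j + 1) + i)) = x' (blockStart x' ((j + 1) + i))
      rw [← hbs i]
      exact hagm _ (bs_le_add x (j + 1) i)
    · rintro ⟨J, hag, hones⟩
      have hsx : blockStart x J = blockStart x' J := by
        rw [bs_eq x J, bs_eq x' J, hones]
      have hΨ : ∀ i, PsiGM x (J + i) = PsiGM x' (J + i) := fun i => hag (J + i) (by omega)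
      obtain ⟨hbs, htail⟩ := engine x x' hx hx' hsx hΨ
      refine ⟨blockStart x J, htail, ?_⟩
      calc ones x (blockStart x J) = ones (PsiGM x) J := ones_bs x hx J
        _ = ones (PsiGM x') J := hones
        _ = ones x' (blockStart x' J) := (ones_bs x' hx' J).symm
        _ = ones x' (blockStart x J) := by rw [hsx]
end

section
/- Let A = [[1,1,1],[0,0,1],[1,0,0]] and A' = [[1,1,0],[0,0,1],[1,0,0]]. Then the SFT Σ_{A'} is a proper subshift of Σ_A using all three symbols, Σ_{A'} is irreducible and aperiodic (A'^k has all entries positive for some k), and Σ_{A'} is invariant under the finite-permutation relation S_A: if x ∈ Σ_{A'} and x' ∈ Σ_A is a finite permutation of x, then x' ∈ Σ_{A'}. -/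
/-- The two-sided SFT determined by a 0-1 transition matrix on three symbols. -/
def SigmaSFT (B : Fin 3 → Fin 3 → Bool) : Set (ℤ → Fin 3) :=
  {x | ∀ k, B (x k) (x (k + 1)) = true}

/-- `x'` is obtained from `x` by permuting finitely many coordinates. -/
def FinPermZ (x x' : ℤ → Fin 3) : Prop :=
  ∃ N : ℕ, (∀ k : ℤ, (N : ℤ) ≤ |k| → x' k = x k) ∧
    ∃ e : Equiv.Perm (Fin (2 * N + 1)), ∀ i : Fin (2 * N + 1),
      x' ((i : ℤ) - N) = x (((e i : ℕ) : ℤ) - N)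

/-- Weight counting occurrences of the symbol 1. -/
def h1f (a : Fin 3) : ℤ := if a = 1 then 1 else 0

/-- Weight counting occurrences of the symbol 2. -/
def h2f (a : Fin 3) : ℤ := if a = 2 then 1 else 0

/-- Path table for aperiodicity with k = 4. -/
def Wpath (i j : Fin 3) : List (Fin 3) :=
  match i.val, j.val with
  | 0, 0 => [0,0,0,0,0]
  | 0, 1 => [0,0,0,0,1]
  | 0, 2 => [0,0,0,1,2]
  | 1, 0 => [1,2,0,0,0]
  | 1, 1 => [1,2,0,0,1]
  | 1, 2 => [1,2,0,1,2]
  | 2, 0 => [2,0,0,0,0]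
  | 2, 1 => [2,0,0,0,1]
  | _, _ => [2,0,0,1,2]

/-- Telescoping identity for the transition weight over a window. -/
lemma tele_exp (N : ℕ) (y : ℤ → Fin 3) :
    ∑ i ∈ Finset.range (2*N), (h2f (y ((i:ℤ)+1-N)) - h1f (y ((i:ℤ)-N)))
      = (∑ i ∈ Finset.range (2*N+1), h2f (y ((i:ℤ)-N)))
        - (∑ i ∈ Finset.range (2*N+1), h1f (y ((i:ℤ)-N)))
        - h2f (y (-(N:ℤ))) + h1f (y ((N:ℤ))) := by
  rw [Finset.sum_sub_distrib]
  have e2 := Finset.sum_range_succ' (fun i : ℕ => h2f (y ((i:ℤ) - N))) (2*N)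
  have e1 := Finset.sum_range_succ (fun i : ℕ => h1f (y ((i:ℤ) - N))) (2*N)
  simp only [Nat.cast_add, Nat.cast_one, Nat.cast_zero] at e2 e1
  have c0 : (0:ℤ) - N = -(N:ℤ) := by ring
  have cL : ((2*N : ℕ) : ℤ) - N = (N:ℤ) := by push_cast; ring
  rw [c0] at e2
  rw [cL] at e1
  rw [e2, e1]
  ring

/-- Permutation invariance of window sums. -/
lemma perm_sum (x x' : ℤ → Fin 3) (N : ℕ) (e : Equiv.Perm (Fin (2*N+1)))
    (h : ∀ i : Fin (2 * N + 1), x' ((i : ℤ) - N) = x (((e i : ℕ) : ℤ) - N))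
    (G : Fin 3 → ℤ) :
    ∑ i ∈ Finset.range (2*N+1), G (x' ((i:ℤ) - N)) =
    ∑ i ∈ Finset.range (2*N+1), G (x ((i:ℤ) - N)) := by
  rw [← Fin.sum_univ_eq_sum_range (fun j : ℕ => G (x' ((j:ℤ) - N))) (2*N+1),
      ← Fin.sum_univ_eq_sum_range (fun j : ℕ => G (x ((j:ℤ) - N))) (2*N+1)]
  rw [← Equiv.sum_comp e (fun i : Fin (2*N+1) => G (x (((i:ℕ):ℤ) - N)))]
  exact Finset.sum_congr rfl fun i _ => by rw [h i]

/-- With `A = [[1,1,1],[0,0,1],[1,0,0]]` and `A' = [[1,1,0],[0,0,1],[1,0,0]]`, the SFT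
`Σ_{A'}` is a proper subshift of `Σ_A` using all three symbols, is irreducible and
aperiodic, and is invariant under the finite-permutation relation `S_A`. -/
theorem stmt_19 (A A' : Fin 3 → Fin 3 → Bool)
    (hA : A = ![![true, true, true], ![false, false, true], ![true, false, false]])
    (hA' : A' = ![![true, true, false], ![false, false, true], ![true, false, false]]) :
    SigmaSFT A' ⊂ SigmaSFT A ∧
    (∀ s : Fin 3, ∃ x ∈ SigmaSFT A', ∃ k : ℤ, x k = s) ∧
    (∃ k : ℕ, 0 < k ∧ ∀ i j : Fin 3, ∃ w : ℕ → Fin 3,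
      w 0 = i ∧ w k = j ∧ ∀ t < k, A' (w t) (w (t + 1)) = true) ∧
    (∀ x ∈ SigmaSFT A', ∀ x' ∈ SigmaSFT A, FinPermZ x x' → x' ∈ SigmaSFT A') := by
  have himp : ∀ a b : Fin 3, A' a b = true → A a b = true := by
    simp only [hA, hA']; decide
  have key1 : ∀ a b : Fin 3, A' a b = true → h2f b - h1f a = 0 := by
    simp only [hA']; decide
  have key2 : ∀ a b : Fin 3, A a b = true → 0 ≤ h2f b - h1f a := by
    simp only [hA]; decide
  have key3 : ∀ a b : Fin 3, A a b = true → h2f b - h1f a = 0 → A' a b = true := by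
    simp only [hA, hA']; decide
  refine ⟨?_, ?_, ?_, ?_⟩
  · -- proper subshift
    rw [Set.ssubset_def]
    constructor
    · intro x hx k
      exact himp _ _ (hx k)
    · intro hcon
      set z : ℤ → Fin 3 := fun k => if k % 2 = 0 then (0 : Fin 3) else 2 with hz
      have hzA : z ∈ SigmaSFT A := by
        intro k
        rcases Int.emod_two_eq k with h | h
        · have h' : (k+1) % 2 = 1 := by omega
          have e0 : z k = 0 := by simp [hz, h]
          have e1 : z (k+1) = 2 := by simp [hz, h']
          rw [e0, e1, hA]; decide
        · have h' : (k+1) % 2 = 0 := by omega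
          have e0 : z k = 2 := by simp [hz, h]
          have e1 : z (k+1) = 0 := by simp [hz, h']
          rw [e0, e1, hA]; decide
      have := hcon hzA 0
      have e0 : z 0 = 0 := by simp only [hz]; norm_num
      have e1 : z (0 + 1) = 2 := by simp only [hz]; norm_num
      rw [e0, e1, hA'] at this
      exact absurd this (by decide)
  · -- all three symbols occur
    set y : ℤ → Fin 3 := fun k =>
      if k % 3 = 0 then (0 : Fin 3) else if k % 3 = 1 then 1 else 2 with hy
    have hyA' : y ∈ SigmaSFT A' := by
      intro k
      have h3 : k % 3 = 0 ∨ k % 3 = 1 ∨ k % 3 = 2 := by omega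
      rcases h3 with h | h | h
      · have h' : (k+1) % 3 = 1 := by omega
        have e0 : y k = 0 := by simp only [hy]; rw [if_pos h]
        have e1 : y (k+1) = 1 := by simp only [hy]; rw [if_neg (by omega), if_pos h']
        rw [e0, e1, hA']; decide
      · have h' : (k+1) % 3 = 2 := by omega
        have e0 : y k = 1 := by simp only [hy]; rw [if_neg (by omega), if_pos h]
        have e1 : y (k+1) = 2 := by simp only [hy]; rw [if_neg (by omega), if_neg (by omega)]
        rw [e0, e1, hA']; decide
      · have h' : (k+1) % 3 = 0 := by omega
        have e0 : y k = 2 := by simp only [hy]; rw [if_neg (by omega), if_neg (by omega)]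
        have e1 : y (k+1) = 0 := by simp only [hy]; rw [if_pos h']
        rw [e0, e1, hA']; decide
    intro s
    refine ⟨y, hyA', ?_⟩
    have v0 : y 0 = 0 := by simp only [hy]; norm_num
    have v1 : y 1 = 1 := by simp only [hy]; norm_num
    have v2 : y 2 = 2 := by simp only [hy]; norm_num
    fin_cases s
    · exact ⟨0, by rw [v0]; rfl⟩
    · exact ⟨1, by rw [v1]; rfl⟩
    · exact ⟨2, by rw [v2]; rfl⟩
  · -- aperiodicity with k = 4
    refine ⟨4, by norm_num, fun i j => ?_⟩
    have hall : ∀ i j : Fin 3, (Wpath i j).getD 0 0 = i ∧ (Wpath i j).getD 4 0 = j ∧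
        ∀ t < 4, A' ((Wpath i j).getD t 0) ((Wpath i j).getD (t+1) 0) = true := by
      simp only [hA']; decide
    exact ⟨fun t => (Wpath i j).getD t 0, (hall i j).1, (hall i j).2.1, (hall i j).2.2⟩
  · -- invariance under finite permutations
    rintro x hx x' hx' ⟨N, hout, e, hperm⟩
    have hbm : x' (-(N:ℤ)) = x (-(N:ℤ)) := hout _ (by simp)
    have hbp : x' ((N:ℤ)) = x ((N:ℤ)) := hout _ (by simp)
    -- the window sum for x is zero
    have hTx : ∑ i ∈ Finset.range (2*N), (h2f (x ((i:ℤ)+1-N)) - h1f (x ((i:ℤ)-N))) = 0 := by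
      refine Finset.sum_eq_zero fun i _ => ?_
      have h := hx ((i:ℤ) - N)
      rw [show ((i:ℤ) - N) + 1 = (i:ℤ) + 1 - N by ring] at h
      exact key1 _ _ h
    -- hence the window sum for x' is zero
    have hTx' : ∑ i ∈ Finset.range (2*N), (h2f (x' ((i:ℤ)+1-N)) - h1f (x' ((i:ℤ)-N))) = 0 := by
      rw [tele_exp N x', perm_sum x x' N e hperm h2f, perm_sum x x' N e hperm h1f,
        hbm, hbp, ← tele_exp N x, hTx]
    -- each term is nonnegative, hence zero
    have hzero : ∀ i ∈ Finset.range (2*N),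
        h2f (x' ((i:ℤ)+1-N)) - h1f (x' ((i:ℤ)-N)) = 0 := by
      have hnn : ∀ i ∈ Finset.range (2*N),
          0 ≤ h2f (x' ((i:ℤ)+1-N)) - h1f (x' ((i:ℤ)-N)) := by
        intro i _
        have h := hx' ((i:ℤ) - N)
        rw [show ((i:ℤ) - N) + 1 = (i:ℤ) + 1 - N by ring] at h
        exact key2 _ _ h
      exact fun i hi => (Finset.sum_eq_zero_iff_of_nonneg hnn).mp hTx' i hi
    intro k
    by_cases hk : -(N:ℤ) ≤ k ∧ k < N
    · -- inside the window
      have hi : (k + N).toNat < 2*N := by omega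
      have h := hzero (k + N).toNat (Finset.mem_range.mpr hi)
      have e1 : (((k + N).toNat : ℕ) : ℤ) - N = k := by omega
      have e2 : (((k + N).toNat : ℕ) : ℤ) + 1 - N = k + 1 := by omega
      rw [e1, e2] at h
      exact key3 _ _ (hx' k) h
    · -- outside the window: x' agrees with x
      have hk' : k < -(N:ℤ) ∨ (N:ℤ) ≤ k := by omega
      have habs1 : (N:ℤ) ≤ |k| := by
        rcases hk' with h | h
        · rw [abs_of_neg (by omega)]; omega
        · exact le_trans h (le_abs_self k)
      have habs2 : (N:ℤ) ≤ |k + 1| := by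
        rcases hk' with h | h
        · rw [abs_of_nonpos (by omega)]; omega
        · calc (N:ℤ) ≤ k + 1 := by omega
            _ ≤ |k + 1| := le_abs_self _
      rw [hout k habs1, hout (k+1) habs2]
      exact hx k
end
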